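/- Let α ∈ (0,1). For R > 0 define λ₁(R) = ∫_ℝ (1 − cos t) |t|^{−2−α} dt − ∫_ℝ (1 + cos t) ( 1 + (2R/|t|)² )^{−(2+α)/2} |t|^{−2−α} dt (both integrals converge absolutely for every R > 0). Then the function R ↦ λ₁(R) is strictly increasing on (0,∞), λ₁(R) → −∞ as R → 0⁺, λ₁(R) → ∫_ℝ (1 − cos t) |t|^{−2−α} dt > 0 as R → +∞, and there exists a unique R > 0 (depending only on α) such that λ₁(R) = 0. -/

import Mathlib

/-!
For `t ≠ 0` the second integrand equals `(1 + cos t) (t² + 4R²)^{-(2+α)/2}`, so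
`λ₁(R) = C - G(2R)` with `C = ∫ (1 - cos t)|t|^{-2-α}` and
`G(a) = ∫ (1 + cos t)(t² + a²)^{-(2+α)/2}`; `C` is finite since `1 - cos t ≤ t²/2` makes its
integrand `O(|t|^{-α})` near `0`.
The integrand of `G` is continuous, strictly decreasing in `a > 0` and dominated by an integrable
function locally uniformly in `a`, so `G` is continuous and strictly decreasing on `(0, ∞)`
and tends to `0` at infinity. Restricting to `a < t ≤ 1`, where `t² + a² ≤ 2t²` and `cos t ≥ 0`,
gives `G(a) ≥ 2^{-(2+α)/2} (1/a - 1)`, so `G(a) → ∞` as `a → 0⁺`. The zero of `λ₁` then comes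
from the intermediate value theorem, and its uniqueness from strict monotonicity.
-/

open MeasureTheory Filter Topology Real

noncomputable def lamOne (α R : ℝ) : ℝ :=
  (∫ t : ℝ, (1 - Real.cos t) * |t| ^ (-(2 + α))) -
    ∫ t : ℝ, (1 + Real.cos t) * (1 + (2 * R / |t|) ^ 2) ^ (-(2 + α) / 2) * |t| ^ (-(2 + α))

open Set

lemma abs_rpow_le_two_rpow_mul_one_add_abs_rpow {s t : ℝ} (hs : 0 ≤ s) (ht : 1 ≤ |t|) :
    |t| ^ (-s) ≤ 2 ^ s * (1 + |t|) ^ (-s) := by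
  have h : (2 * |t|) ^ (-s) ≤ (1 + |t|) ^ (-s) :=
    rpow_le_rpow_of_nonpos (by positivity) (by linarith) (by linarith)
  rwa [mul_rpow zero_le_two (abs_nonneg t), rpow_neg zero_le_two,
    inv_mul_le_iff₀ (by positivity)] at h

lemma one_sub_cos_mul_abs_rpow_le (α t : ℝ) :
    (1 - cos t) * |t| ^ (-(2 + α)) ≤ 2⁻¹ * |t| ^ (-α) := by
  rcases eq_or_ne t 0 with rfl | ht
  · simp [rpow_nonneg]
  have hcos : 1 - cos t ≤ |t| ^ (2 : ℝ) / 2 := by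
    rw [rpow_two, sq_abs]; linarith [one_sub_sq_div_two_le_cos (x := t)]
  calc (1 - cos t) * |t| ^ (-(2 + α)) ≤ |t| ^ (2 : ℝ) / 2 * |t| ^ (-(2 + α)) := by gcongr
    _ = 2⁻¹ * |t| ^ (-α) := by
      rw [div_mul_eq_mul_div, ← rpow_add (abs_pos.2 ht)]; ring_nf

lemma integrable_one_sub_cos_mul_abs_rpow {α : ℝ} (h0 : -1 < α) (h1 : α < 1) :
    Integrable fun t : ℝ => (1 - cos t) * |t| ^ (-(2 + α)) := by
  have hmeas : AEStronglyMeasurable (fun t : ℝ => (1 - cos t) * |t| ^ (-(2 + α))) :=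
    (by fun_prop : Measurable _).aestronglyMeasurable
  have hnorm : ∀ t : ℝ, ‖(1 - cos t) * |t| ^ (-(2 + α))‖ = (1 - cos t) * |t| ^ (-(2 + α)) :=
    fun t => norm_of_nonneg (mul_nonneg (by linarith [cos_le_one t]) (by positivity))
  have hball : IntegrableOn (fun t : ℝ => (1 - cos t) * |t| ^ (-(2 + α))) (Metric.ball 0 1) :=
    integrableOn_ball_of_norm_le_rpow (by simp) (by simpa using h1)
      (ae_of_all _ fun t => (hnorm t).trans_le (one_sub_cos_mul_abs_rpow_le α t)) hmeas
  have hfar : IntegrableOn (fun t : ℝ => (1 - cos t) * |t| ^ (-(2 + α))) (Metric.ball 0 1)ᶜ := by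
    have hdecay := integrable_one_add_norm (E := ℝ) (μ := volume) (r := 2 + α) (by simp; linarith)
    refine Integrable.mono' ((hdecay.const_mul (2 * 2 ^ (2 + α))).integrableOn) hmeas.restrict ?_
    filter_upwards [ae_restrict_mem measurableSet_ball.compl] with t ht
    have ht1 : 1 ≤ |t| := by simpa using ht
    rw [hnorm, norm_eq_abs, mul_assoc]
    exact mul_le_mul (by linarith [neg_one_le_cos t])
      (abs_rpow_le_two_rpow_mul_one_add_abs_rpow (by linarith) ht1) (by positivity) zero_le_two
  simpa using hball.union hfar

lemma integral_one_sub_cos_mul_abs_rpow_pos {α : ℝ} (h0 : -1 < α) (h1 : α < 1) :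
    0 < ∫ t : ℝ, (1 - cos t) * |t| ^ (-(2 + α)) := by
  rw [integral_pos_iff_support_of_nonneg
    (fun t => mul_nonneg (by linarith [cos_le_one t]) (by positivity))
    (integrable_one_sub_cos_mul_abs_rpow h0 h1)]
  have hsupp : Ioo 0 π ⊆ Function.support fun t : ℝ => (1 - cos t) * |t| ^ (-(2 + α)) := by
    intro t ⟨ht0, htπ⟩
    have hcos : cos t < 1 := by
      simpa using cos_lt_cos_of_nonneg_of_le_pi le_rfl htπ.le ht0
    exact (mul_pos (by linarith) (rpow_pos_of_pos (abs_pos.2 ht0.ne') _)).ne'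
  exact (isOpen_Ioo.measure_pos volume (nonempty_Ioo.2 pi_pos)).trans_le (measure_mono hsupp)

lemma integrable_rpow_sq_add {s c : ℝ} (hs : 1 < s) (hc : 0 < c) :
    Integrable fun t : ℝ => (t ^ 2 + c) ^ (-s / 2) := by
  have hm : 0 < min 1 c := lt_min one_pos hc
  have hbound : ∀ t : ℝ,
      (t ^ 2 + c) ^ (-s / 2) ≤ min 1 c ^ (-s / 2) * (1 + ‖t‖ ^ 2) ^ (-s / 2) := by
    intro t
    have hle : min 1 c * (1 + ‖t‖ ^ 2) ≤ t ^ 2 + c := by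
      rw [norm_eq_abs, sq_abs]
      nlinarith [min_le_left 1 c, min_le_right 1 c, sq_nonneg t]
    rw [← mul_rpow hm.le (by positivity)]
    exact rpow_le_rpow_of_nonpos (by positivity) hle (by linarith)
  have hbracket := integrable_rpow_neg_one_add_norm_sq (E := ℝ) (μ := volume) (r := s)
    (by simpa using hs)
  refine (hbracket.const_mul (min 1 c ^ (-s / 2))).mono'
    (by fun_prop : Measurable _).aestronglyMeasurable (ae_of_all _ fun t => ?_)
  rw [norm_of_nonneg (by positivity)]
  exact hbound t

lemma continuous_one_add_cos_mul_rpow_sq_add (s : ℝ) {a : ℝ} (ha : a ≠ 0) :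
    Continuous fun t : ℝ => (1 + cos t) * (t ^ 2 + a ^ 2) ^ (-s / 2) := by
  have hpos : ∀ t : ℝ, t ^ 2 + a ^ 2 ≠ 0 ∨ 0 ≤ -s / 2 := fun t => Or.inl (by positivity)
  exact (continuous_const.add continuous_cos).mul
    ((by fun_prop : Continuous fun t : ℝ => t ^ 2 + a ^ 2).rpow_const hpos)

lemma norm_one_add_cos_mul_rpow_sq_add_le {s a b : ℝ} (hs : 0 ≤ s) (hb : b ≠ 0)
    (hab : b ^ 2 ≤ a ^ 2) (t : ℝ) :
    ‖(1 + cos t) * (t ^ 2 + a ^ 2) ^ (-s / 2)‖ ≤ 2 * (t ^ 2 + b ^ 2) ^ (-s / 2) := by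
  rw [norm_mul, norm_of_nonneg (by linarith [neg_one_le_cos t]), norm_of_nonneg (by positivity)]
  exact mul_le_mul (by linarith [cos_le_one t])
    (rpow_le_rpow_of_nonpos (by positivity) (by linarith) (by linarith)) (by positivity) zero_le_two

lemma integrable_one_add_cos_mul_rpow_sq_add {s a : ℝ} (hs : 1 < s) (ha : a ≠ 0) :
    Integrable fun t : ℝ => (1 + cos t) * (t ^ 2 + a ^ 2) ^ (-s / 2) :=
  ((integrable_rpow_sq_add hs (by positivity)).const_mul 2).mono'
    (continuous_one_add_cos_mul_rpow_sq_add s ha).aestronglyMeasurable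
    (ae_of_all _ (norm_one_add_cos_mul_rpow_sq_add_le (by linarith) ha le_rfl))

noncomputable def oneAddCosIntegral (s a : ℝ) : ℝ :=
  ∫ t : ℝ, (1 + cos t) * (t ^ 2 + a ^ 2) ^ (-s / 2)

section
variable {s : ℝ}

lemma oneAddCosIntegral_strictAntiOn (hs : 1 < s) :
    StrictAntiOn (oneAddCosIntegral s) (Ioi 0) := by
  intro a ha b hb hab
  have ha0 : a ≠ 0 := ne_of_gt ha
  have hb0 : b ≠ 0 := ne_of_gt hb
  have hpt : ∀ {t : ℝ}, t ^ 2 + a ^ 2 < t ^ 2 + b ^ 2 := by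
    intro t; nlinarith [mem_Ioi.1 ha]
  have hpos : 0 < ∫ t : ℝ, ((1 + cos t) * (t ^ 2 + a ^ 2) ^ (-s / 2) -
      (1 + cos t) * (t ^ 2 + b ^ 2) ^ (-s / 2)) := by
    refine integral_pos_of_integrable_nonneg_nonzero (x := 0)
      ((continuous_one_add_cos_mul_rpow_sq_add s ha0).sub
        (continuous_one_add_cos_mul_rpow_sq_add s hb0))
      ((integrable_one_add_cos_mul_rpow_sq_add hs ha0).sub
        (integrable_one_add_cos_mul_rpow_sq_add hs hb0))
      (fun t => sub_nonneg.2 (mul_le_mul_of_nonneg_left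
        (rpow_le_rpow_of_nonpos (by positivity) hpt.le (by linarith))
        (by linarith [neg_one_le_cos t])))
      (sub_ne_zero.2 (ne_of_gt ?_))
    simp only [cos_zero]
    exact mul_lt_mul_of_pos_left (rpow_lt_rpow_of_neg (by positivity) hpt (by linarith))
      (by norm_num)
  rw [integral_sub (integrable_one_add_cos_mul_rpow_sq_add hs ha0)
    (integrable_one_add_cos_mul_rpow_sq_add hs hb0), sub_pos] at hpos
  exact hpos

lemma continuousOn_oneAddCosIntegral (hs : 1 < s) :
    ContinuousOn (oneAddCosIntegral s) (Ioi 0) := by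
  intro a₀ (ha₀ : 0 < a₀)
  refine (continuousAt_of_dominated (bound := fun t => 2 * (t ^ 2 + (a₀ / 2) ^ 2) ^ (-s / 2)) ?_ ?_
    ((integrable_rpow_sq_add hs (by positivity)).const_mul 2)
    (ae_of_all _ fun t => ?_)).continuousWithinAt
  · filter_upwards [Ioi_mem_nhds (half_lt_self ha₀)] with a ha
    exact (continuous_one_add_cos_mul_rpow_sq_add s
      (by linarith [mem_Ioi.1 ha])).aestronglyMeasurable
  · filter_upwards [Ioi_mem_nhds (half_lt_self ha₀)] with a (ha : a₀ / 2 < a)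
    exact ae_of_all _ (norm_one_add_cos_mul_rpow_sq_add_le (by linarith) (by positivity)
      (by nlinarith))
  · exact continuousAt_const.mul
      ((by fun_prop : ContinuousAt (fun a : ℝ => t ^ 2 + a ^ 2) a₀).rpow_const
        (Or.inl (by positivity)))

lemma tendsto_oneAddCosIntegral_atTop (hs : 1 < s) :
    Tendsto (oneAddCosIntegral s) atTop (𝓝 0) := by
  have hlim : ∀ t : ℝ,
      Tendsto (fun a : ℝ => (1 + cos t) * (t ^ 2 + a ^ 2) ^ (-s / 2)) atTop (𝓝 0) := by
    intro t
    have hbase : Tendsto (fun a : ℝ => t ^ 2 + a ^ 2) atTop atTop :=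
      tendsto_atTop_add_const_left _ _ (tendsto_pow_atTop two_ne_zero)
    simpa [neg_div] using ((tendsto_rpow_neg_atTop (by linarith : 0 < s / 2)).comp hbase).const_mul
      (1 + cos t)
  have h := tendsto_integral_filter_of_dominated_convergence (f := fun _ => (0 : ℝ))
    (fun t => 2 * (t ^ 2 + 1 ^ 2) ^ (-s / 2))
    (Eventually.of_forall fun a => (by fun_prop : Measurable _).aestronglyMeasurable)
    (by
      filter_upwards [eventually_ge_atTop 1] with a ha
      exact ae_of_all _
        (norm_one_add_cos_mul_rpow_sq_add_le (by linarith) one_ne_zero (by nlinarith)))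
    ((integrable_rpow_sq_add hs (by positivity : (0 : ℝ) < 1 ^ 2)).const_mul 2) (ae_of_all _ hlim)
  rwa [integral_zero] at h

lemma le_oneAddCosIntegral (hs : 2 ≤ s) {a : ℝ} (ha0 : 0 < a) (ha1 : a < 1) :
    2 ^ (-s / 2) * (a⁻¹ - 1) ≤ oneAddCosIntegral s a := by
  have hint := integrable_one_add_cos_mul_rpow_sq_add (by linarith : 1 < s) ha0.ne'
  have hnear : ∀ t ∈ Ioc a 1,
      2 ^ (-s / 2) * t ^ (-2 : ℤ) ≤ (1 + cos t) * (t ^ 2 + a ^ 2) ^ (-s / 2) := by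
    rintro t ⟨hat, ht1⟩
    have ht0 : 0 < t := ha0.trans hat
    have hcos : 0 ≤ cos t := cos_nonneg_of_mem_Icc ⟨by linarith [pi_pos], by linarith [pi_gt_three]⟩
    calc 2 ^ (-s / 2) * t ^ (-2 : ℤ) = 2 ^ (-s / 2) * (t ^ 2) ^ (-1 : ℝ) := by
          rw [rpow_neg_one, zpow_neg, zpow_two, sq]
      _ ≤ 2 ^ (-s / 2) * (t ^ 2) ^ (-s / 2) :=
          mul_le_mul_of_nonneg_left
            (rpow_le_rpow_of_exponent_ge (by positivity) (by nlinarith) (by linarith))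
            (by positivity)
      _ = (2 * t ^ 2) ^ (-s / 2) := (mul_rpow zero_le_two (by positivity)).symm
      _ ≤ (t ^ 2 + a ^ 2) ^ (-s / 2) :=
          rpow_le_rpow_of_nonpos (by positivity) (by nlinarith) (by linarith)
      _ ≤ (1 + cos t) * (t ^ 2 + a ^ 2) ^ (-s / 2) :=
          le_mul_of_one_le_left (by positivity) (by linarith)
  have hzpow : ∫ t in a..1, t ^ (-2 : ℤ) = a⁻¹ - 1 := by
    rw [integral_zpow (Or.inr ⟨by norm_num, notMem_uIcc_of_lt ha0 one_pos⟩)]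
    norm_num
    ring
  calc 2 ^ (-s / 2) * (a⁻¹ - 1) = ∫ t in Ioc a 1, 2 ^ (-s / 2) * t ^ (-2 : ℤ) := by
        rw [integral_const_mul, ← intervalIntegral.integral_of_le ha1.le, hzpow]
    _ ≤ ∫ t in Ioc a 1, (1 + cos t) * (t ^ 2 + a ^ 2) ^ (-s / 2) :=
        setIntegral_mono_on (((intervalIntegral.intervalIntegrable_zpow
          (Or.inr (notMem_uIcc_of_lt ha0 one_pos))).1).const_mul _) hint.integrableOn
          measurableSet_Ioc hnear
    _ ≤ oneAddCosIntegral s a := setIntegral_le_integral hint (ae_of_all _ fun t =>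
        mul_nonneg (by linarith [neg_one_le_cos t]) (by positivity))

lemma tendsto_oneAddCosIntegral_nhdsGT_zero (hs : 2 ≤ s) :
    Tendsto (oneAddCosIntegral s) (𝓝[>] 0) atTop := by
  refine tendsto_atTop_mono' _ ?_
    ((tendsto_atTop_add_const_right _ (-1) tendsto_inv_nhdsGT_zero).const_mul_atTop
      (by positivity : (0 : ℝ) < 2 ^ (-s / 2)))
  filter_upwards [Ioo_mem_nhdsGT one_pos] with a ⟨ha0, ha1⟩
  exact le_oneAddCosIntegral hs ha0 ha1

end

lemma one_add_div_abs_sq_rpow_mul_abs_rpow (s a : ℝ) {t : ℝ} (ht : t ≠ 0) :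
    (1 + (a / |t|) ^ 2) ^ (-s / 2) * |t| ^ (-s) = (t ^ 2 + a ^ 2) ^ (-s / 2) := by
  have habs : 0 < |t| := abs_pos.2 ht
  rw [show |t| ^ (-s) = (|t| ^ 2) ^ (-s / 2) by
      rw [← rpow_natCast, ← rpow_mul habs.le]; norm_num; ring_nf,
    ← mul_rpow (by positivity) (by positivity), add_mul, div_pow,
    div_mul_cancel₀ _ (by positivity), sq_abs, one_mul]

lemma lamOne_integrand_ae_eq (α R : ℝ) :
    (fun t : ℝ => (1 + cos t) * (1 + (2 * R / |t|) ^ 2) ^ (-(2 + α) / 2) * |t| ^ (-(2 + α)))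
      =ᵐ[volume] fun t => (1 + cos t) * (t ^ 2 + (2 * R) ^ 2) ^ (-(2 + α) / 2) := by
  filter_upwards [Measure.ae_ne volume 0] with t ht
  rw [mul_assoc, one_add_div_abs_sq_rpow_mul_abs_rpow _ _ ht]

lemma lamOne_eq (α R : ℝ) :
    lamOne α R =
      (∫ t : ℝ, (1 - cos t) * |t| ^ (-(2 + α))) - oneAddCosIntegral (2 + α) (2 * R) :=
  congrArg _ (integral_congr_ae (lamOne_integrand_ae_eq α R))

/-- **Existence and uniqueness of the width `R` making `λ₁` vanish.** For `α ∈ (0,1)`: both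
integrals defining `λ₁(R)` converge absolutely for every `R > 0`; `R ↦ λ₁(R)` is strictly
increasing on `(0,∞)`; `λ₁(R) → −∞` as `R → 0⁺`; `λ₁(R) → ∫_ℝ (1−cos t)|t|^{−2−α} dt > 0` as
`R → +∞`; and there is a unique `R > 0` with `λ₁(R) = 0`. -/
theorem lambda_one_properties (α : ℝ) (hα : α ∈ Set.Ioo (0:ℝ) 1) :
    Integrable (fun t : ℝ => (1 - Real.cos t) * |t| ^ (-(2 + α))) ∧
    (∀ R : ℝ, 0 < R → Integrable
      (fun t : ℝ => (1 + Real.cos t) * (1 + (2 * R / |t|) ^ 2) ^ (-(2 + α) / 2) * |t| ^ (-(2 + α)))) ∧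
    StrictMonoOn (lamOne α) (Set.Ioi 0) ∧
    Tendsto (lamOne α) (𝓝[>] (0:ℝ)) atBot ∧
    Tendsto (lamOne α) atTop (𝓝 (∫ t : ℝ, (1 - Real.cos t) * |t| ^ (-(2 + α)))) ∧
    0 < ∫ t : ℝ, (1 - Real.cos t) * |t| ^ (-(2 + α)) ∧
    ∃! R : ℝ, 0 < R ∧ lamOne α R = 0 := by
  obtain ⟨hα0, hα1⟩ := hα
  have hs : 2 ≤ 2 + α := by linarith
  set C := ∫ t : ℝ, (1 - cos t) * |t| ^ (-(2 + α))
  have hlam : lamOne α = fun R => C - oneAddCosIntegral (2 + α) (2 * R) := funext (lamOne_eq α)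
  have hdouble : MapsTo (fun R : ℝ => 2 * R) (Ioi 0) (Ioi 0) :=
    fun R (hR : 0 < R) => (mul_pos two_pos hR : 0 < 2 * R)
  have hdouble_nhdsGT : Tendsto (fun R : ℝ => 2 * R) (𝓝[>] 0) (𝓝[>] 0) :=
    tendsto_nhdsWithin_iff.2 ⟨((continuous_const_mul (2 : ℝ)).tendsto' 0 0 (mul_zero 2)).mono_left
      nhdsWithin_le_nhds, eventually_nhdsWithin_of_forall hdouble⟩
  have hmono : StrictMonoOn (lamOne α) (Ioi 0) := fun a ha b hb hab => by
    simpa [hlam] using oneAddCosIntegral_strictAntiOn (by linarith) (hdouble ha) (hdouble hb)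
      (by linarith : 2 * a < 2 * b)
  have hcont : ContinuousOn (lamOne α) (Ioi 0) := hlam ▸ continuousOn_const.sub
    ((continuousOn_oneAddCosIntegral (by linarith)).comp
      (continuousOn_const.mul continuousOn_id) hdouble)
  have hbot : Tendsto (lamOne α) (𝓝[>] 0) atBot := hlam ▸ tendsto_atBot_add_const_left _ C
    (tendsto_neg_atTop_atBot.comp ((tendsto_oneAddCosIntegral_nhdsGT_zero hs).comp hdouble_nhdsGT))
  have htop : Tendsto (lamOne α) atTop (𝓝 C) := by
    simpa [hlam] using tendsto_const_nhds.sub ((tendsto_oneAddCosIntegral_atTop (by linarith)).comp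
      (tendsto_id.const_mul_atTop two_pos))
  have hC : 0 < C := integral_one_sub_cos_mul_abs_rpow_pos (by linarith) hα1
  obtain ⟨R, hR, hR0⟩ := isPreconnected_Ioi.intermediate_value_Iio
    (le_principal_iff.2 self_mem_nhdsWithin) (le_principal_iff.2 (Ioi_mem_atTop 0))
    hcont hbot htop hC
  refine ⟨integrable_one_sub_cos_mul_abs_rpow (by linarith) hα1, fun r hr => ?_, hmono, hbot, htop,
    hC, R, ⟨hR, hR0⟩, fun y hy => hmono.injOn hy.1 hR (hy.2.trans hR0.symm)⟩
  exact (integrable_one_add_cos_mul_rpow_sq_add (s := 2 + α) (by linarith)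
    (by positivity : 2 * r ≠ 0)).congr (lamOne_integrand_ae_eq α r).symm
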